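/- Let p be a probability distribution on ℝ^d, σ > 0, and let x̃ = x_true + ξ where x_true ~ p and ξ ~ N(0, σ² I_d) is independent of x_true. Let p_{x̃} denote the conditional law of x_true given x̃. Then for any δ ∈ (0,1) and δ' ∈ (0,1), setting r = σ·(√d + √(2·log(1/(δ·δ')))), with probability at least 1 − δ' over x̃ it holds that P_{x ∼ p_{x̃}}[ x ∈ B(x̃, r) ] ≥ 1 − δ. -/

import Mathlib

/-!
Averaged over `x̃`, the posterior mass outside `B(x̃, r)` is the joint probability that
`‖x_true - x̃‖ = ‖ξ‖` exceeds `r` (disintegrate the law of `(x̃, x_true)`). A Chernoff bound with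
`E exp (θ ‖ξ‖² / σ²) = (1 - 2θ)^(-d/2)` gives `P(‖ξ‖ > σ(√d + √(2t))) ≤ exp (-t)`, which is `δδ'`
for `t = log (1/(δδ'))`. By Markov's inequality the posterior mass outside the ball then exceeds
`δ` with probability at most `δ'`.
-/

open MeasureTheory ProbabilityTheory Metric

/-- The density of the isotropic Gaussian `N(0, σ² I_d)` on `ℝ^d`. -/
noncomputable def gaussDensity (d : ℕ) (σ2 : ℝ) (x : EuclideanSpace ℝ (Fin d)) : ℝ :=
  (2 * Real.pi * σ2) ^ (-(d : ℝ) / 2) * Real.exp (-‖x‖ ^ 2 / (2 * σ2))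

/-- The isotropic Gaussian measure `N(0, σ² I_d)` on `ℝ^d`. -/
noncomputable def gaussMeasure (d : ℕ) (σ2 : ℝ) : Measure (EuclideanSpace ℝ (Fin d)) :=
  volume.withDensity fun x => ENNReal.ofReal (gaussDensity d σ2 x)

open Real
open scoped ENNReal

lemma neg_log_le_inv_sub_self_div_two {y : ℝ} (hy : 0 < y) (hy1 : y ≤ 1) :
    -log y ≤ (y⁻¹ - y) / 2 := by
  have h := self_le_sinh_iff.mpr (neg_nonneg.mpr (log_nonpos hy.le hy1))
  rwa [sinh_eq, neg_neg, exp_neg, exp_log hy] at h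

/-- The Chernoff bound `gaussMeasure_norm_gt_le` at `θ = s / (u + 2s)` and `r = σ(u + √2 s)`,
where `u = √d`, `s = √t`; then `1 - 2θ = u / (u + 2s)`. -/
lemma rpow_neg_mul_exp_le_exp_neg_sq {u s : ℝ} (hu : 0 < u) (hs : 0 ≤ s) :
    (u / (u + 2 * s)) ^ (-u ^ 2 / 2) * exp (-(s / (u + 2 * s) * (u + √2 * s) ^ 2)) ≤
      exp (-s ^ 2) := by
  have hus : 0 < u + 2 * s := by positivity
  have hy : 0 < u / (u + 2 * s) := div_pos hu hus
  have hlog := neg_log_le_inv_sub_self_div_two hy (div_le_one_of_le₀ (by linarith) hus.le)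
  have hsqrt : (u + s) ^ 2 + s ^ 2 ≤ (u + √2 * s) ^ 2 := by
    have h1 : 1 ≤ √2 := one_le_sqrt.mpr one_le_two
    nlinarith [sq_sqrt (zero_le_two (α := ℝ)), mul_nonneg (mul_nonneg hu.le hs) (sub_nonneg.mpr h1)]
  rw [rpow_def_of_pos hy, ← exp_add, exp_le_exp]
  calc log (u / (u + 2 * s)) * (-u ^ 2 / 2) + -(s / (u + 2 * s) * (u + √2 * s) ^ 2)
      ≤ u ^ 2 / 2 * (((u / (u + 2 * s))⁻¹ - u / (u + 2 * s)) / 2)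
          - s / (u + 2 * s) * ((u + s) ^ 2 + s ^ 2) := by
        have := mul_le_mul_of_nonneg_left hlog (by positivity : 0 ≤ u ^ 2 / 2)
        have := mul_le_mul_of_nonneg_left hsqrt (by positivity : 0 ≤ s / (u + 2 * s))
        linarith
    _ = -s ^ 2 := by field_simp; ring

variable {d : ℕ}

lemma gaussDensity_nonneg {σ2 : ℝ} (hσ2 : 0 ≤ σ2) (x : EuclideanSpace ℝ (Fin d)) :
    0 ≤ gaussDensity d σ2 x := by
  unfold gaussDensity; positivity

theorem lintegral_exp_mul_norm_sq_gaussMeasure {σ2 θ : ℝ} (hσ2 : 0 < σ2) (hθ : θ < 1 / 2) :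
    ∫⁻ x, ENNReal.ofReal (exp (θ * ‖x‖ ^ 2 / σ2)) ∂gaussMeasure d σ2 =
      ENNReal.ofReal ((1 - 2 * θ) ^ (-(d : ℝ) / 2)) := by
  have h2θ : 0 < 1 - 2 * θ := by linarith
  set b := (1 - 2 * θ) / (2 * σ2) with hb_def
  have hb : 0 < b := by positivity
  have hdensity : ∀ x : EuclideanSpace ℝ (Fin d), gaussDensity d σ2 x * exp (θ * ‖x‖ ^ 2 / σ2) =
      (2 * π * σ2) ^ (-(d : ℝ) / 2) * exp (-b * ‖x‖ ^ 2) := by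
    intro x
    rw [gaussDensity, mul_assoc, ← exp_add]
    congr 2
    rw [hb_def]
    field_simp
    ring
  have hintegral :
      ∫ x : EuclideanSpace ℝ (Fin d), (2 * π * σ2) ^ (-(d : ℝ) / 2) * exp (-b * ‖x‖ ^ 2) =
        (1 - 2 * θ) ^ (-(d : ℝ) / 2) := by
    rw [integral_const_mul, GaussianFourier.integral_rexp_neg_mul_sq_norm hb,
      finrank_euclideanSpace_fin, show π / b = 2 * π * σ2 / (1 - 2 * θ) by rw [hb_def]; field_simp,
      div_rpow (by positivity) h2θ.le, neg_div, rpow_neg (by positivity), rpow_neg h2θ.le]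
    field_simp
  rw [gaussMeasure, lintegral_withDensity_eq_lintegral_mul₀
    (by unfold gaussDensity; fun_prop) (by fun_prop)]
  simp only [Pi.mul_apply, ← ENNReal.ofReal_mul (gaussDensity_nonneg hσ2.le _), hdensity]
  rw [← ofReal_integral_eq_lintegral_ofReal, hintegral]
  · exact Integrable.of_integral_ne_zero (by rw [hintegral]; positivity)
  · exact Filter.Eventually.of_forall fun x => by positivity

theorem gaussMeasure_norm_gt_le {σ2 θ r : ℝ} (hσ2 : 0 < σ2) (hθ0 : 0 ≤ θ) (hθ : θ < 1 / 2)
    (hr : 0 ≤ r) :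
    gaussMeasure d σ2 {x | r < ‖x‖} ≤
      ENNReal.ofReal ((1 - 2 * θ) ^ (-(d : ℝ) / 2) * exp (-(θ * r ^ 2 / σ2))) := by
  have hsubset : {x : EuclideanSpace ℝ (Fin d) | r < ‖x‖} ⊆
      {x | ENNReal.ofReal (exp (θ * r ^ 2 / σ2)) ≤ ENNReal.ofReal (exp (θ * ‖x‖ ^ 2 / σ2))} :=
    fun x hx => ENNReal.ofReal_le_ofReal <| exp_le_exp.mpr <| by gcongr; exact hx.le
  calc gaussMeasure d σ2 {x | r < ‖x‖}
      ≤ (∫⁻ x, ENNReal.ofReal (exp (θ * ‖x‖ ^ 2 / σ2)) ∂gaussMeasure d σ2) /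
          ENNReal.ofReal (exp (θ * r ^ 2 / σ2)) :=
        (measure_mono hsubset).trans <| meas_ge_le_lintegral_div (by fun_prop)
          (by positivity) ENNReal.ofReal_ne_top
    _ = ENNReal.ofReal ((1 - 2 * θ) ^ (-(d : ℝ) / 2) * exp (-(θ * r ^ 2 / σ2))) := by
        rw [lintegral_exp_mul_norm_sq_gaussMeasure hσ2 hθ,
          ← ENNReal.ofReal_div_of_pos (exp_pos _), exp_neg, div_eq_mul_inv]

theorem gaussMeasure_norm_gt_le_exp_neg {σ t : ℝ} (hσ : 0 < σ) (ht : 0 ≤ t) :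
    gaussMeasure d (σ ^ 2) {x | σ * (√d + √(2 * t)) < ‖x‖} ≤ ENNReal.ofReal (exp (-t)) := by
  rcases Nat.eq_zero_or_pos d with rfl | hd
  · refine (measure_mono_null (fun x hx => ?_) measure_empty).le.trans zero_le
    rw [Set.mem_ofPred, Subsingleton.elim x 0, norm_zero] at hx
    exact (not_lt.mpr (by positivity) hx).elim
  set u := √d
  set s := √t
  have hu : 0 < u := sqrt_pos.mpr (by exact_mod_cast hd)
  have hs : 0 ≤ s := sqrt_nonneg t
  have hus : 0 < u + 2 * s := by positivity
  have hr : σ * (√d + √(2 * t)) = σ * (u + √2 * s) := by rw [sqrt_mul zero_le_two]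
  calc gaussMeasure d (σ ^ 2) {x | σ * (√d + √(2 * t)) < ‖x‖}
      ≤ ENNReal.ofReal ((1 - 2 * (s / (u + 2 * s))) ^ (-(d : ℝ) / 2) *
          exp (-(s / (u + 2 * s) * (σ * (u + √2 * s)) ^ 2 / σ ^ 2))) := by
        rw [hr]
        refine gaussMeasure_norm_gt_le (by positivity) (by positivity) ?_ (by positivity)
        rw [div_lt_iff₀ hus]; linarith
    _ ≤ ENNReal.ofReal (exp (-t)) := by
        refine ENNReal.ofReal_le_ofReal ?_
        convert rpow_neg_mul_exp_le_exp_neg_sq hu hs using 3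
        · field_simp; ring
        · rw [sq_sqrt (Nat.cast_nonneg d)]
        · rw [mul_pow]; field_simp
        · rw [sq_sqrt ht]

theorem lintegral_condDistrib_prodMk_preimage {Ω α β : Type*} {mΩ : MeasurableSpace Ω}
    {μ : Measure Ω} [IsFiniteMeasure μ] [MeasurableSpace α] [StandardBorelSpace α] [Nonempty α]
    [MeasurableSpace β] {X : Ω → α} {Y : Ω → β} (hX : AEMeasurable X μ) (hY : Measurable Y)
    {s : Set (β × α)} (hs : MeasurableSet s) :
    ∫⁻ ω, condDistrib X Y μ (Y ω) (Prod.mk (Y ω) ⁻¹' s) ∂μ = μ ((fun ω => (Y ω, X ω)) ⁻¹' s) := by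
  rw [← lintegral_map (Kernel.measurable_kernel_prodMk_left hs) hY, ← Measure.compProd_apply hs,
    compProd_map_condDistrib hX, Measure.map_apply_of_aemeasurable (by fun_prop) hs]

lemma measurableSet_dist_swap_le {α : Type*} [PseudoMetricSpace α] [SecondCountableTopology α]
    [MeasurableSpace α] [OpensMeasurableSpace α] (r : ℝ) :
    MeasurableSet {p : α × α | dist p.2 p.1 ≤ r} :=
  measurableSet_le (measurable_snd.dist measurable_fst) measurable_const

section PosteriorBall

variable {Ω α : Type*} {mΩ : MeasurableSpace Ω} {μ : Measure Ω}
  [PseudoMetricSpace α] [PolishSpace α] [MeasurableSpace α] [BorelSpace α] [Nonempty α]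
  {X Y : Ω → α}

theorem measurable_condDistrib_compl_closedBall [IsFiniteMeasure μ] (hY : Measurable Y) (r : ℝ) :
    Measurable fun ω => condDistrib X Y μ (Y ω) (closedBall (Y ω) r)ᶜ :=
  (Kernel.measurable_kernel_prodMk_left (measurableSet_dist_swap_le r).compl).comp hY

theorem lintegral_condDistrib_compl_closedBall [IsFiniteMeasure μ] (hX : AEMeasurable X μ)
    (hY : Measurable Y) (r : ℝ) :
    ∫⁻ ω, condDistrib X Y μ (Y ω) (closedBall (Y ω) r)ᶜ ∂μ = μ {ω | r < dist (X ω) (Y ω)} := by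
  convert lintegral_condDistrib_prodMk_preimage hX hY (measurableSet_dist_swap_le r).compl using 2
  · rfl
  · ext ω
    simp

theorem one_sub_measure_dist_div_le_measure_condDistrib_closedBall [IsProbabilityMeasure μ]
    (hX : AEMeasurable X μ) (hY : Measurable Y) (r : ℝ) {ε : ℝ≥0∞} (hε : ε ≠ 0) (hε' : ε ≠ ∞) :
    1 - μ {ω | r < dist (X ω) (Y ω)} / ε ≤
      μ {ω | 1 - ε ≤ condDistrib X Y μ (Y ω) (closedBall (Y ω) r)} := by
  have hbad : μ {ω | condDistrib X Y μ (Y ω) (closedBall (Y ω) r) < 1 - ε} ≤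
      μ {ω | r < dist (X ω) (Y ω)} / ε := by
    rw [← lintegral_condDistrib_compl_closedBall hX hY]
    refine (measure_mono fun ω hω => ?_).trans (meas_ge_le_lintegral_div
      (measurable_condDistrib_compl_closedBall hY r).aemeasurable hε hε')
    rw [Set.mem_ofPred, prob_compl_eq_one_sub measurableSet_closedBall]
    exact (lt_tsub_comm.mp hω).le
  have hcover := measure_univ_le_add_compl (μ := μ)
    {ω | 1 - ε ≤ condDistrib X Y μ (Y ω) (closedBall (Y ω) r)}
  simp only [measure_univ, Set.compl_ofPred, not_le] at hcover
  exact tsub_le_iff_right.mpr (hcover.trans (add_le_add_right hbad _))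

end PosteriorBall

theorem posterior_concentration_around_gaussian_measurement_general (d : ℕ)
    {Ω : Type*} [MeasureSpace Ω] [IsProbabilityMeasure (ℙ : Measure Ω)]
    (xtrue ξ : Ω → EuclideanSpace ℝ (Fin d))
    (hxtrue : Measurable xtrue) (hξ : Measurable ξ)
    (σ : ℝ) (hσ : 0 < σ)
    (hξlaw : Measure.map ξ ℙ = gaussMeasure d (σ ^ 2))
    (xt : Ω → EuclideanSpace ℝ (Fin d)) (hxt : ∀ ω, xt ω = xtrue ω + ξ ω)
    (δ δ' : ℝ) (hδ : δ ∈ Set.Ioo (0 : ℝ) 1) (hδ' : δ' ∈ Set.Ioo (0 : ℝ) 1)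
    (r : ℝ) (hrdef : r = σ * (Real.sqrt d + Real.sqrt (2 * Real.log (1 / (δ * δ'))))) :
    ENNReal.ofReal (1 - δ') ≤
      ℙ {ω | ENNReal.ofReal (1 - δ) ≤
        (condDistrib xtrue xt ℙ) (xt ω) (closedBall (xt ω) r)} := by
  obtain ⟨hδ0, hδ1⟩ := hδ
  obtain ⟨hδ'0, hδ'1⟩ := hδ'
  have hδδ' : 0 < δ * δ' := mul_pos hδ0 hδ'0
  have hxt_meas : Measurable xt := (funext hxt : xt = _) ▸ hxtrue.add hξ
  have htail : ℙ {ω | r < dist (xtrue ω) (xt ω)} ≤ ENNReal.ofReal (δ * δ') := by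
    have hlog : 0 ≤ log (1 / (δ * δ')) :=
      log_nonneg (one_le_one_div hδδ' (by nlinarith))
    simp_rw [hxt, dist_self_add_right]
    change ℙ (ξ ⁻¹' {x | r < ‖x‖}) ≤ _
    rw [← Measure.map_apply hξ (measurableSet_lt measurable_const measurable_norm), hξlaw, hrdef]
    convert gaussMeasure_norm_gt_le_exp_neg hσ hlog
    rw [one_div, log_inv, neg_neg, exp_log hδδ']
  have hmarkov := one_sub_measure_dist_div_le_measure_condDistrib_closedBall
    (μ := (ℙ : Measure Ω)) hxtrue.aemeasurable hxt_meas r (ε := ENNReal.ofReal δ)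
    (by simpa using hδ0) ENNReal.ofReal_ne_top
  rw [ENNReal.ofReal_sub _ hδ0.le, ENNReal.ofReal_sub _ hδ'0.le, ENNReal.ofReal_one]
  refine le_trans ?_ hmarkov
  gcongr
  rw [← mul_div_cancel_left₀ δ' hδ0.ne', ENNReal.ofReal_div_of_pos hδ0]
  exact ENNReal.div_le_div_right htail _

/-- Let `x̃ = x_true + ξ` with `x_true ~ p` and `ξ ~ N(0, σ² I_d)`
independent.  For `δ, δ' ∈ (0,1)` and `r = σ(√d + √(2 log(1/(δδ'))))`, with probability
at least `1 − δ'` over `x̃`, the posterior of `x_true` given `x̃` puts mass at least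
`1 − δ` on the ball `B(x̃, r)`. -/
theorem posterior_concentration_around_gaussian_measurement (d : ℕ)
    {Ω : Type*} [MeasureSpace Ω] [IsProbabilityMeasure (ℙ : Measure Ω)]
    (xtrue ξ : Ω → EuclideanSpace ℝ (Fin d))
    (hxtrue : Measurable xtrue) (hξ : Measurable ξ)
    (σ : ℝ) (hσ : 0 < σ)
    (hξlaw : Measure.map ξ ℙ = gaussMeasure d (σ ^ 2))
    (hindep : IndepFun xtrue ξ ℙ)
    (xt : Ω → EuclideanSpace ℝ (Fin d)) (hxt : ∀ ω, xt ω = xtrue ω + ξ ω)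
    (δ δ' : ℝ) (hδ : δ ∈ Set.Ioo (0 : ℝ) 1) (hδ' : δ' ∈ Set.Ioo (0 : ℝ) 1)
    (r : ℝ) (hrdef : r = σ * (Real.sqrt d + Real.sqrt (2 * Real.log (1 / (δ * δ'))))) :
    ENNReal.ofReal (1 - δ') ≤
      ℙ {ω | ENNReal.ofReal (1 - δ) ≤
        (condDistrib xtrue xt ℙ) (xt ω) (closedBall (xt ω) r)} :=
  posterior_concentration_around_gaussian_measurement_general d xtrue ξ hxtrue hξ σ hσ hξlaw xt hxt
    δ δ' hδ hδ' r hrdef
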